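/- If continuous paths ψ_n → ψ and r_n → r uniformly on every compact subset of [0,∞), with ψ_n(0) ≤ r_n(0) for all n and ψ(0) ≤ r(0), then the one-sided Skorokhod reflections φ_n of ψ_n below r_n converge uniformly on compacts to the reflection φ of ψ below r. -/

import Mathlib

/-! The reflection map is Lipschitz for the uniform norm on `[0, t]`: the supremum
`sup_{s ≤ t} (ψ s - r s)` moves by at most `‖ψ - ψ'‖ + ‖r - r'‖`, and `max 0` is 1-Lipschitz.
Uniform convergence of the data on `[0, T]` therefore passes to the reflections. -/

open Set Filter

/-- One-sided Skorokhod reflection of `ψ` below the moving barrier `r`. -/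
noncomputable def reflBelow (ψ r : ℝ → ℝ) (t : ℝ) : ℝ :=
  ψ t - max 0 (sSup ((fun s => ψ s - r s) '' Icc 0 t))

lemma csSup_image_le_csSup_image_add {α : Type*} {S : Set α} {f g : α → ℝ} {δ : ℝ}
    (hS : S.Nonempty) (hg : BddAbove (g '' S)) (h : ∀ s ∈ S, f s ≤ g s + δ) :
    sSup (f '' S) ≤ sSup (g '' S) + δ := by
  refine csSup_le (hS.image f) ?_
  rintro _ ⟨s, hs, rfl⟩
  exact (h s hs).trans (add_le_add_left (le_csSup hg (mem_image_of_mem g hs)) δ)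

lemma BddAbove.image_of_abs_sub_le {α : Type*} {S : Set α} {f g : α → ℝ} {δ : ℝ}
    (hf : BddAbove (f '' S)) (h : ∀ s ∈ S, |f s - g s| ≤ δ) : BddAbove (g '' S) := by
  obtain ⟨M, hM⟩ := hf
  refine ⟨M + δ, ?_⟩
  rintro _ ⟨s, hs, rfl⟩
  have hfs : f s ≤ M := hM (mem_image_of_mem f hs)
  linarith [(abs_le.mp (h s hs)).1]

lemma abs_csSup_image_sub_csSup_image_le {α : Type*} {S : Set α} {f g : α → ℝ} {δ : ℝ}
    (hS : S.Nonempty) (hf : BddAbove (f '' S)) (h : ∀ s ∈ S, |f s - g s| ≤ δ) :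
    |sSup (f '' S) - sSup (g '' S)| ≤ δ := by
  have hg := hf.image_of_abs_sub_le h
  have hfg := csSup_image_le_csSup_image_add (f := f) (δ := δ) hS hg fun s hs => by
    linarith [(abs_sub_le_iff.mp (h s hs)).1]
  have hgf := csSup_image_le_csSup_image_add (f := g) (δ := δ) hS hf fun s hs => by
    linarith [(abs_sub_le_iff.mp (h s hs)).2]
  exact abs_sub_le_iff.mpr ⟨by linarith, by linarith⟩

lemma abs_reflBelow_sub_reflBelow_le {ψ r ψ' r' : ℝ → ℝ} {t a b : ℝ} (ht : 0 ≤ t)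
    (hbdd : BddAbove ((fun s => ψ s - r s) '' Icc 0 t))
    (hψ : ∀ s ∈ Icc 0 t, |ψ s - ψ' s| ≤ a) (hr : ∀ s ∈ Icc 0 t, |r s - r' s| ≤ b) :
    |reflBelow ψ r t - reflBelow ψ' r' t| ≤ 2 * a + b := by
  have hsup : |sSup ((fun s => ψ s - r s) '' Icc 0 t) - sSup ((fun s => ψ' s - r' s) '' Icc 0 t)|
      ≤ a + b := by
    refine abs_csSup_image_sub_csSup_image_le ⟨0, le_rfl, ht⟩ hbdd fun s hs => ?_
    calc |ψ s - r s - (ψ' s - r' s)| = |(ψ s - ψ' s) - (r s - r' s)| := by ring_nf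
      _ ≤ |ψ s - ψ' s| + |r s - r' s| := abs_sub _ _
      _ ≤ a + b := add_le_add (hψ s hs) (hr s hs)
  have hmax := (abs_max_sub_max_le_abs _ _ 0).trans hsup
  rw [max_comm, max_comm (sSup _)] at hmax
  unfold reflBelow
  calc _ = |(ψ t - ψ' t) - (max 0 (sSup ((fun s => ψ s - r s) '' Icc 0 t))
          - max 0 (sSup ((fun s => ψ' s - r' s) '' Icc 0 t)))| := by ring_nf
    _ ≤ _ := abs_sub _ _
    _ ≤ a + (a + b) := add_le_add (hψ t ⟨ht, le_rfl⟩) hmax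
    _ = 2 * a + b := by ring

lemma TendstoUniformlyOn.abs_sub_le_eventually {ι α : Type*} {l : Filter ι} {F : ι → α → ℝ}
    {f : α → ℝ} {S : Set α} (h : TendstoUniformlyOn F f l S) {ε : ℝ} (hε : 0 < ε) :
    ∀ᶠ n in l, ∀ s ∈ S, |f s - F n s| ≤ ε := by
  filter_upwards [Metric.tendstoUniformlyOn_iff.mp h ε hε] with n hn s hs
  exact (hn s hs).le

theorem reflection_continuous_in_data_general
    (ψ r : ℝ → ℝ) (ψn rn : ℕ → ℝ → ℝ)
    (hψ : Continuous ψ) (hr : Continuous r)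
    (hψconv : ∀ T : ℝ, 0 ≤ T →
      TendstoUniformlyOn (fun n t => ψn n t) ψ atTop (Icc 0 T))
    (hrconv : ∀ T : ℝ, 0 ≤ T →
      TendstoUniformlyOn (fun n t => rn n t) r atTop (Icc 0 T)) :
    ∀ T : ℝ, 0 ≤ T →
      TendstoUniformlyOn (fun n t => reflBelow (ψn n) (rn n) t)
        (fun t => reflBelow ψ r t) atTop (Icc 0 T) := by
  intro T hT
  refine Metric.tendstoUniformlyOn_iff.mpr fun ε hε => ?_
  filter_upwards [(hψconv T hT).abs_sub_le_eventually (by positivity : 0 < ε / 4),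
    (hrconv T hT).abs_sub_le_eventually (by positivity : 0 < ε / 4)] with n hψn hrn t ht
  have hsub : Icc 0 t ⊆ Icc 0 T := Icc_subset_Icc le_rfl ht.2
  have hbdd : BddAbove ((fun s => ψ s - r s) '' Icc 0 t) :=
    (isCompact_Icc.image (hψ.sub hr)).bddAbove
  rw [Real.dist_eq]
  calc _ ≤ 2 * (ε / 4) + ε / 4 := abs_reflBelow_sub_reflBelow_le ht.1 hbdd
          (fun s hs => hψn s (hsub hs)) (fun s hs => hrn s (hsub hs))
    _ < ε := by linarith

/-- Continuity of the one-sided Skorokhod reflection map: if `ψₙ → ψ` and `rₙ → r`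
uniformly on every compact subset of `[0,∞)`, then the reflections of `ψₙ` below
`rₙ` converge uniformly on compacts to the reflection of `ψ` below `r`. -/
theorem reflection_continuous_in_data
    (ψ r : ℝ → ℝ) (ψn rn : ℕ → ℝ → ℝ)
    (hψ : Continuous ψ) (hr : Continuous r)
    (hψn : ∀ n, Continuous (ψn n)) (hrn : ∀ n, Continuous (rn n))
    (h0n : ∀ n, ψn n 0 ≤ rn n 0) (h0 : ψ 0 ≤ r 0)
    (hψconv : ∀ T : ℝ, 0 ≤ T →
      TendstoUniformlyOn (fun n t => ψn n t) ψ atTop (Icc 0 T))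
    (hrconv : ∀ T : ℝ, 0 ≤ T →
      TendstoUniformlyOn (fun n t => rn n t) r atTop (Icc 0 T)) :
    ∀ T : ℝ, 0 ≤ T →
      TendstoUniformlyOn (fun n t => reflBelow (ψn n) (rn n) t)
        (fun t => reflBelow ψ r t) atTop (Icc 0 T) :=
  reflection_continuous_in_data_general ψ r ψn rn hψ hr hψconv hrconv
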